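/- arXiv:1401.6737 — 2 statements merged into one kernel-verified Lean document; each statement's English description precedes it below -/
import Mathlib

section
/- Assume (Ω, Γ, Σ₀) satisfies the flow-covering condition with time T > 0. Let v be continuously differentiable on an open neighborhood of closure(Ω) with v(y) = 0 for every y ∈ Γ. Then for every x ∈ Ω, |v(x)| ≤ T · sup_{y ∈ closure(Ω)} |⟨Σ₀(y), ∇v(y)⟩|. -/
open scoped RealInnerProductSpace

def FlowCovering {n : ℕ} (Ω Γ : Set (EuclideanSpace ℝ (Fin n)))
    (S₀ : EuclideanSpace ℝ (Fin n) → EuclideanSpace ℝ (Fin n)) (T : ℝ) : Prop :=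
  ∀ x ∈ Ω, ∃ s ∈ Set.Icc (0 : ℝ) T, ∃ γ : ℝ → EuclideanSpace ℝ (Fin n),
    (∀ r ∈ Set.Icc (0 : ℝ) s, γ r ∈ closure Ω) ∧ γ 0 ∈ Γ ∧ γ s = x ∧
    ∀ r ∈ Set.Icc (0 : ℝ) s, HasDerivAt γ (S₀ (γ r)) r

/-! Along a characteristic `γ` of `S₀` the derivative of `v ∘ γ` is `⟪S₀, ∇v⟫ ∘ γ`, so the mean
value inequality bounds `|v x| = |v (γ s) - v (γ 0)|` by `s ≤ T` times the supremum of
`|⟪S₀, ∇v⟫|` on `closure Ω`, which is finite since that function is continuous on a compact set. -/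

open Set

section

variable {F : Type*} [NormedAddCommGroup F] [InnerProductSpace ℝ F] [CompleteSpace F]

theorem HasGradientAt.comp_hasDerivAt {v : F → ℝ} {v' : F} {γ : ℝ → F} {γ' : F} {t : ℝ}
    (hv : HasGradientAt v v' (γ t)) (hγ : HasDerivAt γ γ' t) :
    HasDerivAt (v ∘ γ) ⟪v', γ'⟫ t := by
  simpa using hv.hasFDerivAt.comp_hasDerivAt t hγ

theorem ContDiffOn.continuousOn_gradient {v : F → ℝ} {U : Set F} (hv : ContDiffOn ℝ 1 v U)
    (hU : IsOpen U) : ContinuousOn (gradient v) U :=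
  (InnerProductSpace.toDual ℝ F).symm.continuous.comp_continuousOn
    (hv.continuousOn_fderiv_of_isOpen hU le_rfl)

theorem abs_sub_le_mul_of_integral_curve {S₀ : F → F} {v : F → ℝ} {γ : ℝ → F} {s M : ℝ}
    (hs : 0 ≤ s) (hγ : ∀ r ∈ Icc 0 s, HasDerivAt γ (S₀ (γ r)) r)
    (hv : ∀ r ∈ Icc 0 s, DifferentiableAt ℝ v (γ r))
    (hM : ∀ r ∈ Icc 0 s, |⟪S₀ (γ r), gradient v (γ r)⟫| ≤ M) :
    |v (γ s) - v (γ 0)| ≤ M * s := by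
  have hderiv : ∀ r ∈ Icc 0 s,
      HasDerivWithinAt (v ∘ γ) ⟪gradient v (γ r), S₀ (γ r)⟫ (Icc 0 s) r := fun r hr =>
    ((hv r hr).hasGradientAt.comp_hasDerivAt (hγ r hr)).hasDerivWithinAt
  simpa [real_inner_comm] using norm_image_sub_le_of_norm_deriv_le_segment' hderiv
    (fun r hr => by simpa [real_inner_comm] using hM r (Ico_subset_Icc_self hr)) s ⟨hs, le_rfl⟩

end

theorem sup_poincare_friedrichs_along_characteristics_general
    (n : ℕ) (Ω Γ : Set (EuclideanSpace ℝ (Fin n)))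
    (S₀ : EuclideanSpace ℝ (Fin n) → EuclideanSpace ℝ (Fin n))
    (L : NNReal) (T : ℝ)
    (hΩb : Bornology.IsBounded Ω)
    (hLip : LipschitzWith L S₀)
    (hflow : FlowCovering Ω Γ S₀ T)
    (v : EuclideanSpace ℝ (Fin n) → ℝ) (U : Set (EuclideanSpace ℝ (Fin n)))
    (hU : IsOpen U) (hΩU : closure Ω ⊆ U) (hv : ContDiffOn ℝ 1 v U)
    (hv0 : ∀ y ∈ Γ, v y = 0) :
    ∀ x ∈ Ω, |v x| ≤ T * sSup ((fun y => |⟪S₀ y, gradient v y⟫|) '' closure Ω) := by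
  intro x hx
  obtain ⟨s, ⟨hs0, hsT⟩, γ, hγΩ, hγ0, rfl, hγ⟩ := hflow x hx
  set M := sSup ((fun y => |⟪S₀ y, gradient v y⟫|) '' closure Ω)
  have hbdd : BddAbove ((fun y => |⟪S₀ y, gradient v y⟫|) '' closure Ω) :=
    hΩb.isCompact_closure.bddAbove_image
      (hLip.continuous.continuousOn.inner ((hv.continuousOn_gradient hU).mono hΩU)).abs
  have hM : 0 ≤ M := Real.sSup_nonneg (by rintro _ ⟨y, -, rfl⟩; exact abs_nonneg _)
  calc |v (γ s)| = |v (γ s) - v (γ 0)| := by rw [hv0 _ hγ0, sub_zero]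
    _ ≤ M * s := abs_sub_le_mul_of_integral_curve hs0 hγ
        (fun r hr => (hv.differentiableOn one_ne_zero).differentiableAt
          (hU.mem_nhds (hΩU (hγΩ r hr))))
        (fun r hr => le_csSup hbdd ⟨γ r, hγΩ r hr, rfl⟩)
    _ ≤ T * M := by rw [mul_comm]; gcongr

/-- Sup-norm form of the Poincaré–Friedrichs inequality along characteristics:
under the flow-covering condition, a `C¹` function vanishing on `Γ` satisfies
`|v x| ≤ T · sup_{y ∈ closure Ω} |⟪S₀ y, ∇v y⟫|` for every `x ∈ Ω`. -/
theorem sup_poincare_friedrichs_along_characteristics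
    (n : ℕ) (Ω Γ : Set (EuclideanSpace ℝ (Fin n)))
    (S₀ : EuclideanSpace ℝ (Fin n) → EuclideanSpace ℝ (Fin n))
    (L : NNReal) (T : ℝ)
    (hΩo : IsOpen Ω) (hΩb : Bornology.IsBounded Ω) (hΓ : Γ ⊆ frontier Ω)
    (hLip : LipschitzWith L S₀) (hT : 0 < T)
    (hflow : FlowCovering Ω Γ S₀ T)
    (v : EuclideanSpace ℝ (Fin n) → ℝ) (U : Set (EuclideanSpace ℝ (Fin n)))
    (hU : IsOpen U) (hΩU : closure Ω ⊆ U) (hv : ContDiffOn ℝ 1 v U)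
    (hv0 : ∀ y ∈ Γ, v y = 0) :
    ∀ x ∈ Ω, |v x| ≤ T * sSup ((fun y => |⟪S₀ y, gradient v y⟫|) '' closure Ω) :=
  sup_poincare_friedrichs_along_characteristics_general n Ω Γ S₀ L T hΩb hLip hflow v U hU hΩU hv
    hv0
end

section
/- Assume (Ω, Γ, Σ₀) satisfies the flow-covering condition with time T > 0, and let σ₀ be a continuous real-valued function on closure(Ω). If v is continuously differentiable on an open neighborhood of closure(Ω), vanishes at every point of Γ, and satisfies ⟨Σ₀(x), ∇v(x)⟩ + σ₀(x)·v(x) = 0 for every x ∈ closure(Ω), then v(x) = 0 for every x ∈ Ω. -/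
open scoped RealInnerProductSpace

/-! Along a flow line `γ` of `S₀`, the chain rule turns the transport equation into the linear
ODE `(v ∘ γ)' = -σ₀(γ) · (v ∘ γ)`. Since `σ₀` is bounded on the compact set `closure Ω`,
Grönwall's inequality forces `v ∘ γ` to stay zero when it starts at zero on `Γ`; every point of
`Ω` is reached by such a flow line. -/

open Set

variable {F : Type*} [NormedAddCommGroup F] [InnerProductSpace ℝ F] [CompleteSpace F]

theorem DifferentiableAt.hasDerivAt_comp_inner_gradient {v : F → ℝ} {γ : ℝ → F} {w : F} {t : ℝ}
    (hv : DifferentiableAt ℝ v (γ t)) (hγ : HasDerivAt γ w t) :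
    HasDerivAt (fun r => v (γ r)) ⟪w, gradient v (γ t)⟫ t := by
  rw [real_inner_comm, inner_gradient_left]
  exact hv.hasFDerivAt.comp_hasDerivAt t hγ

theorem eq_zero_along_integral_curve_of_transport_eq_zero {S : F → F} {σ v : F → ℝ}
    {C : Set F} {K : ℝ} (hv : ∀ x ∈ C, DifferentiableAt ℝ v x) (hσ : ∀ x ∈ C, ‖σ x‖ ≤ K)
    (hPDE : ∀ x ∈ C, ⟪S x, gradient v x⟫ + σ x * v x = 0) {γ : ℝ → F} {a b : ℝ}
    (hγC : ∀ r ∈ Icc a b, γ r ∈ C) (hγ : ∀ r ∈ Icc a b, HasDerivAt γ (S (γ r)) r)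
    (ha : v (γ a) = 0) : ∀ r ∈ Icc a b, v (γ r) = 0 := by
  have hderiv : ∀ r ∈ Icc a b, HasDerivAt (fun t => v (γ t)) (-(σ (γ r) * v (γ r))) r := by
    intro r hr
    rw [← eq_neg_of_add_eq_zero_left (hPDE _ (hγC r hr))]
    exact (hv _ (hγC r hr)).hasDerivAt_comp_inner_gradient (hγ r hr)
  refine eq_zero_of_abs_deriv_le_mul_abs_self_of_eq_zero_right (K := K)
    (fun r hr => (hderiv r hr).continuousAt.continuousWithinAt)
    (fun r hr => (hderiv r (Ico_subset_Icc_self hr)).hasDerivWithinAt) ha fun r hr => ?_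
  rw [norm_neg, norm_mul]
  exact mul_le_mul_of_nonneg_right (hσ _ (hγC r (Ico_subset_Icc_self hr))) (norm_nonneg _)

theorem transport_uniqueness_general
    (n : ℕ) (Ω Γ : Set (EuclideanSpace ℝ (Fin n)))
    (S₀ : EuclideanSpace ℝ (Fin n) → EuclideanSpace ℝ (Fin n))
    (T : ℝ)
    (hΩb : Bornology.IsBounded Ω)
    (hflow : FlowCovering Ω Γ S₀ T)
    (σ₀ : EuclideanSpace ℝ (Fin n) → ℝ)
    (hσ₀ : ContinuousOn σ₀ (closure Ω))
    (v : EuclideanSpace ℝ (Fin n) → ℝ) (U : Set (EuclideanSpace ℝ (Fin n)))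
    (hU : IsOpen U) (hΩU : closure Ω ⊆ U) (hv : ContDiffOn ℝ 1 v U)
    (hv0 : ∀ y ∈ Γ, v y = 0)
    (hPDE : ∀ x ∈ closure Ω, ⟪S₀ x, gradient v x⟫ + σ₀ x * v x = 0) :
    ∀ x ∈ Ω, v x = 0 := by
  intro x hx
  obtain ⟨s, hs, γ, hγΩ, hγ0, rfl, hγ⟩ := hflow x hx
  obtain ⟨K, hK⟩ := hΩb.isCompact_closure.exists_bound_of_continuousOn hσ₀
  have hvd : ∀ y ∈ closure Ω, DifferentiableAt ℝ v y := fun y hy =>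
    (hv.contDiffAt (hU.mem_nhds (hΩU hy))).differentiableAt one_ne_zero
  exact eq_zero_along_integral_curve_of_transport_eq_zero hvd hK hPDE hγΩ hγ (hv0 _ hγ0) s
    ⟨hs.1, le_rfl⟩

/-- Injectivity of the transport operator `S₀·∇ + σ₀` with zero data on `Γ`
(Lemma 4.2): under the flow-covering condition, a `C¹` function vanishing on `Γ`
and satisfying `S₀·∇v + σ₀ v = 0` on `closure Ω` vanishes on `Ω`. -/
theorem transport_uniqueness
    (n : ℕ) (Ω Γ : Set (EuclideanSpace ℝ (Fin n)))
    (S₀ : EuclideanSpace ℝ (Fin n) → EuclideanSpace ℝ (Fin n))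
    (L : NNReal) (T : ℝ)
    (hΩo : IsOpen Ω) (hΩb : Bornology.IsBounded Ω) (hΓ : Γ ⊆ frontier Ω)
    (hLip : LipschitzWith L S₀) (hT : 0 < T)
    (hflow : FlowCovering Ω Γ S₀ T)
    (σ₀ : EuclideanSpace ℝ (Fin n) → ℝ)
    (hσ₀ : ContinuousOn σ₀ (closure Ω))
    (v : EuclideanSpace ℝ (Fin n) → ℝ) (U : Set (EuclideanSpace ℝ (Fin n)))
    (hU : IsOpen U) (hΩU : closure Ω ⊆ U) (hv : ContDiffOn ℝ 1 v U)
    (hv0 : ∀ y ∈ Γ, v y = 0)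
    (hPDE : ∀ x ∈ closure Ω, ⟪S₀ x, gradient v x⟫ + σ₀ x * v x = 0) :
    ∀ x ∈ Ω, v x = 0 :=
  transport_uniqueness_general n Ω Γ S₀ T hΩb hflow σ₀ hσ₀ v U hU hΩU hv hv0 hPDE
end
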